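/- Let A₁, A₂, B₁, B₂ be Hermitian operators with square equal to the identity on finite-dimensional Hilbert spaces H_A, H_B, and ρ a state on H_A ⊗ H_B. Then tr(ρ𝓑) ≤ √(4 + |tr(ρ·([A₁,A₂]⊗[B₁,B₂]))|), where 𝓑 is the CHSH operator. -/

import Mathlib

open Matrix Kronecker ComplexOrder

/-!
Since the four observables are involutions, the CHSH operator squares to
`𝓑² = 4 - [A₁,A₂] ⊗ [B₁,B₂]`. As `𝓑` is Hermitian, its variance in `ρ` is nonnegative, so
`⟨𝓑⟩² ≤ ⟨𝓑²⟩ = 4 - ⟨[A₁,A₂] ⊗ [B₁,B₂]⟩ ≤ 4 + |⟨[A₁,A₂] ⊗ [B₁,B₂]⟩|`.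
-/

namespace Matrix

variable {R l m n p : Type*}

theorem kronecker_sub [NonUnitalNonAssocRing R] (A : Matrix l m R) (B₁ B₂ : Matrix n p R) :
    A ⊗ₖ (B₁ - B₂) = A ⊗ₖ B₁ - A ⊗ₖ B₂ := by
  ext
  simp [mul_sub]

theorem sub_kronecker [NonUnitalNonAssocRing R] (A₁ A₂ : Matrix l m R) (B : Matrix n p R) :
    (A₁ - A₂) ⊗ₖ B = A₁ ⊗ₖ B - A₂ ⊗ₖ B := by
  ext
  simp [sub_mul]

theorem IsHermitian.kronecker [CommMagma R] [StarMul R] {A : Matrix l l R} {B : Matrix n n R}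
    (hA : A.IsHermitian) (hB : B.IsHermitian) : (A ⊗ₖ B).IsHermitian := by
  rw [IsHermitian, conjTranspose_kronecker, hA.eq, hB.eq]

theorem PosSemidef.trace_mul_conjTranspose_mul_self_nonneg [Fintype n] [CommRing R]
    [PartialOrder R] [StarRing R] [AddLeftMono R] {ρ : Matrix n n R} (hρ : ρ.PosSemidef)
    (M : Matrix n n R) : 0 ≤ (ρ * (Mᴴ * M)).trace := by
  rw [← Matrix.mul_assoc, trace_mul_cycle]
  exact (hρ.mul_mul_conjTranspose_same M).trace_nonneg

theorem PosSemidef.sq_re_trace_mul_le [Fintype n] [DecidableEq n] {ρ X : Matrix n n ℂ}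
    (hρ : ρ.PosSemidef) (hρtr : ρ.trace = 1) (hX : X.IsHermitian) :
    (ρ * X).trace.re ^ 2 ≤ (ρ * (X * X)).trace.re := by
  set t := (ρ * X).trace.re
  set Y := X - (t : ℂ) • 1
  have hY : Yᴴ = Y := by simp [Y, hX.eq]
  have hYY : Y * Y = X * X - ((2 * t : ℝ) : ℂ) • X + ((t ^ 2 : ℝ) : ℂ) • 1 := by
    simp only [Y, sub_mul, mul_sub, Matrix.smul_mul, Matrix.mul_smul, mul_one, one_mul]
    push_cast
    module
  have hexp : (ρ * (Y * Y)).trace =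
      (ρ * (X * X)).trace - ((2 * t : ℝ) : ℂ) * (ρ * X).trace + ((t ^ 2 : ℝ) : ℂ) := by
    rw [hYY, mul_add, mul_sub, trace_add, trace_sub, Matrix.mul_smul, Matrix.mul_smul, mul_one,
      trace_smul, trace_smul, hρtr, smul_eq_mul, smul_eq_mul, mul_one]
  have hvar := (Complex.nonneg_iff.mp (hρ.trace_mul_conjTranspose_mul_self_nonneg Y)).1
  rw [hY, hexp, Complex.add_re, Complex.sub_re, Complex.re_ofReal_mul, Complex.ofReal_re] at hvar
  linarith

end Matrix

section CHSH

variable {R l n : Type*} [CommRing R]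

def chshOperator (A₁ A₂ : Matrix l l R) (B₁ B₂ : Matrix n n R) : Matrix (l × n) (l × n) R :=
  A₁ ⊗ₖ (B₁ + B₂) + A₂ ⊗ₖ (B₁ - B₂)

theorem chshOperator_mul_self [Fintype l] [DecidableEq l] [Fintype n] [DecidableEq n]
    {A₁ A₂ : Matrix l l R} {B₁ B₂ : Matrix n n R}
    (hA₁ : A₁ * A₁ = 1) (hA₂ : A₂ * A₂ = 1) (hB₁ : B₁ * B₁ = 1) (hB₂ : B₂ * B₂ = 1) :
    chshOperator A₁ A₂ B₁ B₂ * chshOperator A₁ A₂ B₁ B₂ =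
      (4 : R) • 1 - (A₁ * A₂ - A₂ * A₁) ⊗ₖ (B₁ * B₂ - B₂ * B₁) := by
  simp only [chshOperator, add_mul, mul_add, sub_mul, mul_sub, ← mul_kronecker_mul, hA₁, hA₂, hB₁,
    hB₂, kronecker_add, kronecker_sub, sub_kronecker, one_kronecker_one]
  module

theorem isHermitian_chshOperator [StarRing R] {A₁ A₂ : Matrix l l R} {B₁ B₂ : Matrix n n R}
    (hA₁ : A₁.IsHermitian) (hA₂ : A₂.IsHermitian) (hB₁ : B₁.IsHermitian) (hB₂ : B₂.IsHermitian) :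
    (chshOperator A₁ A₂ B₁ B₂).IsHermitian :=
  (hA₁.kronecker (hB₁.add hB₂)).add (hA₂.kronecker (hB₁.sub hB₂))

end CHSH

/-- Tsirelson's relation: ⟨𝓑⟩ ≤ √(4 + |⟨[A₁,A₂]⊗[B₁,B₂]⟩|). -/
theorem chsh_commutator_bound {m n : ℕ}
    (A₁ A₂ : Matrix (Fin m) (Fin m) ℂ) (B₁ B₂ : Matrix (Fin n) (Fin n) ℂ)
    (hA₁ : A₁.IsHermitian) (hA₂ : A₂.IsHermitian)
    (hB₁ : B₁.IsHermitian) (hB₂ : B₂.IsHermitian)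
    (hA₁u : A₁ * A₁ = 1) (hA₂u : A₂ * A₂ = 1)
    (hB₁u : B₁ * B₁ = 1) (hB₂u : B₂ * B₂ = 1)
    (ρ : Matrix (Fin m × Fin n) (Fin m × Fin n) ℂ)
    (hρ : ρ.PosSemidef) (hρtr : ρ.trace = 1) :
    ((ρ * (A₁ ⊗ₖ (B₁ + B₂) + A₂ ⊗ₖ (B₁ - B₂))).trace).re ≤
      Real.sqrt (4 +
        ‖(ρ * ((A₁ * A₂ - A₂ * A₁) ⊗ₖ (B₁ * B₂ - B₂ * B₁))).trace‖) := by
  set z := (ρ * ((A₁ * A₂ - A₂ * A₁) ⊗ₖ (B₁ * B₂ - B₂ * B₁))).trace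
  have hvar := hρ.sq_re_trace_mul_le hρtr (isHermitian_chshOperator hA₁ hA₂ hB₁ hB₂)
  have hsq : (ρ * (chshOperator A₁ A₂ B₁ B₂ * chshOperator A₁ A₂ B₁ B₂)).trace = 4 - z := by
    rw [chshOperator_mul_self hA₁u hA₂u hB₁u hB₂u, mul_sub, trace_sub, Matrix.mul_smul, mul_one,
      trace_smul, hρtr, smul_eq_mul, mul_one]
  have hre : (4 - z).re ≤ 4 + ‖z‖ := by
    simpa [sub_eq_add_neg] using Complex.re_le_norm (-z)
  rw [hsq] at hvar
  exact (le_abs_self _).trans (Real.abs_le_sqrt (hvar.trans hre))
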